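/- Let 0 < d₁ < d₂ and let f ∈ W^{1,1}(𝕊¹;𝕊¹) with deg f = d₁ satisfy f ∧ f' > 0 almost everywhere. Then for every g ∈ W^{1,1}(𝕊¹;𝕊¹) with deg g = d₂, the strict inequality ∫_{𝕊¹}|f' - g'| > 2π(d₂ - d₁) holds; in particular the infimum inf_g ∫|f'-g'| = 2π(d₂-d₁) is not attained. -/

import Mathlib

open Real MeasureTheory

/-- `f = e^{iφ}` is a `W^{1,1}` map `𝕊¹ → 𝕊¹` of degree `d`, with phase `φ` and integrable
weak derivative `φ'` of the phase. Note `f ∧ f' = φ'` pointwise a.e. -/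
def MemE (d : ℤ) (φ φ' : ℝ → ℝ) : Prop :=
  (∀ θ : ℝ, φ (θ + 2 * π) = φ θ + 2 * π * d) ∧
  (∀ a b : ℝ, IntervalIntegrable φ' volume a b) ∧
  (∀ a b : ℝ, φ b - φ a = ∫ t in a..b, φ' t)

/-- The `W^{1,1}` seminorm distance `∫_{𝕊¹} |f' - g'|`. -/
noncomputable def dist11 (φ φ' ψ ψ' : ℝ → ℝ) : ℝ :=
  ∫ θ in (0:ℝ)..(2 * π),
    ‖Complex.I * (φ' θ : ℂ) * Complex.exp (Complex.I * (φ θ : ℂ)) -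
      Complex.I * (ψ' θ : ℂ) * Complex.exp (Complex.I * (ψ θ : ℂ))‖

/-! The pointwise reverse triangle inequality `|f' - g'| ≥ |g'| - |f'| ≥ ψ' - φ'` (using `φ' ≥ 0`)
integrates to `∫ |f' - g'| ≥ ∫ (ψ' - φ') = 2π(d₂ - d₁)`. Equality would force equality a.e. in
the law of cosines `|f' - g'|² = φ'² + ψ'² - 2φ'ψ' cos(ψ - φ)`, hence (as `φ' > 0`) `cos(ψ - φ) = 1`
a.e., hence everywhere on `[0, 2π]` by continuity. But `ψ - φ` increases by `2π(d₂ - d₁) ≥ 2π`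
over `[0, 2π]`, so it passes through a value where the cosine is `-1`. -/

/-- The velocity `i p e^{ia}` of `θ ↦ e^{iφ(θ)}` at a point where `φ = a` and `φ' = p`. -/
noncomputable def circleVelocity (p a : ℝ) : ℂ :=
  Complex.I * p * Complex.exp (Complex.I * a)

theorem dist11_eq (φ φ' ψ ψ' : ℝ → ℝ) :
    dist11 φ φ' ψ ψ' = ∫ θ in (0 : ℝ)..(2 * π),
      ‖circleVelocity (φ' θ) (φ θ) - circleVelocity (ψ' θ) (ψ θ)‖ :=
  rfl

section circleVelocity

variable (p q a b : ℝ)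

theorem continuous_circleVelocity : Continuous (Function.uncurry circleVelocity) := by
  unfold circleVelocity Function.uncurry
  fun_prop

@[simp]
theorem norm_circleVelocity : ‖circleVelocity p a‖ = |p| := by
  simp [circleVelocity, mul_comm Complex.I (a : ℂ), Complex.norm_exp_ofReal_mul_I]

theorem normSq_circleVelocity_sub :
    Complex.normSq (circleVelocity p a - circleVelocity q b) =
      p ^ 2 + q ^ 2 - 2 * p * q * Real.cos (b - a) := by
  simp only [circleVelocity, mul_comm Complex.I (a : ℂ), mul_comm Complex.I (b : ℂ),
    Complex.exp_mul_I]
  simp [Complex.normSq_apply, Real.cos_sub, Complex.cos_ofReal_re, Complex.sin_ofReal_re]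
  nlinarith [Real.sin_sq_add_cos_sq a, Real.sin_sq_add_cos_sq b]

variable {p q a b}

theorem sub_le_norm_circleVelocity_sub (hp : 0 ≤ p) :
    q - p ≤ ‖circleVelocity p a - circleVelocity q b‖ := by
  have h := norm_sub_norm_le (circleVelocity q b) (circleVelocity p a)
  rw [norm_sub_rev, norm_circleVelocity, norm_circleVelocity, abs_of_nonneg hp] at h
  linarith [le_abs_self q]

theorem cos_eq_one_of_norm_circleVelocity_sub_eq (hp : 0 < p)
    (h : ‖circleVelocity p a - circleVelocity q b‖ = q - p) : Real.cos (b - a) = 1 := by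
  have hpq : p ≤ q := by linarith [norm_nonneg (circleVelocity p a - circleVelocity q b)]
  have hsq := normSq_circleVelocity_sub p q a b
  rw [← Complex.sq_norm, h] at hsq
  nlinarith [mul_pos hp (hp.trans_le hpq), Real.cos_le_one (b - a)]

end circleVelocity

theorem exists_mem_Icc_cos_eq_neg {δ : ℝ → ℝ} {a b : ℝ} (hab : a ≤ b)
    (hδ : ContinuousOn δ (Set.Icc a b)) (hincr : δ a + π ≤ δ b) :
    ∃ θ ∈ Set.Icc a b, Real.cos (δ θ) = -Real.cos (δ a) := by
  obtain ⟨θ, hθ, hδθ⟩ := intermediate_value_Icc hab hδ ⟨by linarith [pi_pos], hincr⟩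
  exact ⟨θ, hθ, by rw [hδθ, Real.cos_add_pi]⟩

namespace MemE

variable {d d₁ d₂ : ℤ} {φ φ' ψ ψ' : ℝ → ℝ}

theorem continuous (hφ : MemE d φ φ') : Continuous φ := by
  refine Continuous.congr (f := fun b => φ 0 + ∫ t in (0 : ℝ)..b, φ' t)
    (continuous_const.add (intervalIntegral.continuous_primitive hφ.2.1 0)) fun b => ?_
  linarith [hφ.2.2 0 b]

theorem integral_eq (hφ : MemE d φ φ') : ∫ t in (0 : ℝ)..(2 * π), φ' t = 2 * π * d := by
  rw [← hφ.2.2, ← zero_add (2 * π), hφ.1 0]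
  ring

theorem integral_sub_eq (hφ : MemE d₁ φ φ') (hψ : MemE d₂ ψ ψ') :
    ∫ t in (0 : ℝ)..(2 * π), (ψ' t - φ' t) = 2 * π * ((d₂ : ℝ) - d₁) := by
  rw [intervalIntegral.integral_sub (hψ.2.1 _ _) (hφ.2.1 _ _), hψ.integral_eq, hφ.integral_eq]
  ring

theorem intervalIntegrable_norm_circleVelocity_sub (hφ : MemE d₁ φ φ') (hψ : MemE d₂ ψ ψ')
    (a b : ℝ) :
    IntervalIntegrable
      (fun θ => ‖circleVelocity (φ' θ) (φ θ) - circleVelocity (ψ' θ) (ψ θ)‖) volume a b := by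
  have hmeas {d : ℤ} {φ φ' : ℝ → ℝ} (hφ : MemE d φ φ') :
      AEStronglyMeasurable (fun θ => circleVelocity (φ' θ) (φ θ)) (volume.restrict (Set.uIoc a b)) :=
    continuous_circleVelocity.comp_aestronglyMeasurable₂ (hφ.2.1 a b).def'.aestronglyMeasurable
      hφ.continuous.aestronglyMeasurable
  refine ((hφ.2.1 a b).abs.add (hψ.2.1 a b).abs).mono_fun' ((hmeas hφ).sub (hmeas hψ)).norm
    (Filter.Eventually.of_forall fun θ => ?_)
  simpa using norm_sub_le (circleVelocity (φ' θ) (φ θ)) (circleVelocity (ψ' θ) (ψ θ))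

theorem not_ae_cos_sub_eq_one (h : d₁ < d₂) (hφ : MemE d₁ φ φ') (hψ : MemE d₂ ψ ψ') :
    ¬ ∀ᵐ θ ∂volume.restrict (Set.Ioc 0 (2 * π)), Real.cos (ψ θ - φ θ) = 1 := by
  intro hcos
  have hπ : (0 : ℝ) < 2 * π := by positivity
  have hδ : Continuous fun θ => ψ θ - φ θ := hψ.continuous.sub hφ.continuous
  have hcos_Icc : Set.EqOn (fun θ => Real.cos (ψ θ - φ θ)) 1 (Set.Icc 0 (2 * π)) :=
    Measure.eqOn_of_ae_eq (ae_restrict_congr_set Ioc_ae_eq_Icc |>.1 hcos)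
      (Real.continuous_cos.comp hδ).continuousOn continuousOn_const
      (closure_interior_Icc hπ.ne).symm.subset
  have hincr : (ψ 0 - φ 0) + π ≤ ψ (2 * π) - φ (2 * π) := by
    have hd : (1 : ℝ) ≤ d₂ - d₁ := by exact_mod_cast Int.sub_pos_of_lt h
    have hψ0 := hψ.1 0
    have hφ0 := hφ.1 0
    rw [zero_add] at hψ0 hφ0
    rw [hψ0, hφ0]
    nlinarith [pi_pos]
  obtain ⟨θ, hθ, hneg⟩ := exists_mem_Icc_cos_eq_neg hπ.le hδ.continuousOn hincr
  have h1 := hcos_Icc hθ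
  have h0 := hcos_Icc (Set.left_mem_Icc.2 hπ.le)
  simp only [Pi.one_apply] at h0 h1
  linarith

theorem two_pi_mul_sub_lt_dist11 (h : d₁ < d₂) (hφ : MemE d₁ φ φ') (hψ : MemE d₂ ψ ψ')
    (hpos : ∀ᵐ θ ∂volume.restrict (Set.Ioc 0 (2 * π)), 0 < φ' θ) :
    2 * π * ((d₂ : ℝ) - d₁) < dist11 φ φ' ψ ψ' := by
  have hle : ∀ᵐ θ ∂volume.restrict (Set.Ioc 0 (2 * π)),
      ψ' θ - φ' θ ≤ ‖circleVelocity (φ' θ) (φ θ) - circleVelocity (ψ' θ) (ψ θ)‖ := by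
    filter_upwards [hpos] with θ hθ using sub_le_norm_circleVelocity_sub hθ.le
  rw [← hφ.integral_sub_eq hψ, dist11_eq]
  refine intervalIntegral.integral_lt_integral_of_ae_le_of_measure_setOfPred_lt_ne_zero
    (by positivity) ((hψ.2.1 _ _).sub (hφ.2.1 _ _))
    (hφ.intervalIntegrable_norm_circleVelocity_sub hψ _ _) hle fun hnull => ?_
  refine hφ.not_ae_cos_sub_eq_one h hψ ?_
  filter_upwards [measure_eq_zero_iff_ae_notMem.1 hnull, hle, hpos] with θ hnlt hθle hθ
  exact cos_eq_one_of_norm_circleVelocity_sub_eq hθ (le_antisymm (not_lt.1 hnlt) hθle)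

end MemE

theorem stmt8_general (d₁ d₂ : ℤ) (h₂ : d₁ < d₂) (φ φ' : ℝ → ℝ)
    (hφ : MemE d₁ φ φ')
    (hpos : ∀ᵐ θ ∂(volume : Measure ℝ), θ ∈ Set.Ioo 0 (2 * π) → 0 < φ' θ) :
    (∀ ψ ψ' : ℝ → ℝ, MemE d₂ ψ ψ' →
      2 * π * ((d₂ : ℝ) - (d₁ : ℝ)) < dist11 φ φ' ψ ψ') ∧
    ¬ ∃ ψ ψ' : ℝ → ℝ, MemE d₂ ψ ψ' ∧
        dist11 φ φ' ψ ψ' = 2 * π * ((d₂ : ℝ) - (d₁ : ℝ)) := by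
  have hpos' : ∀ᵐ θ ∂volume.restrict (Set.Ioc 0 (2 * π)), 0 < φ' θ :=
    ae_restrict_of_ae_eq_of_ae_restrict Ioo_ae_eq_Ioc ((ae_restrict_iff' measurableSet_Ioo).2 hpos)
  have hlt ψ ψ' (hψ : MemE d₂ ψ ψ') := hφ.two_pi_mul_sub_lt_dist11 h₂ hψ hpos'
  exact ⟨hlt, fun ⟨ψ, ψ', hψ, heq⟩ => (hlt ψ ψ' hψ).ne' heq⟩

/-- If `0 < d₁ < d₂` and `f ∈ E_{d₁}` satisfies `f ∧ f' > 0` a.e. (i.e. `φ' > 0` a.e. on a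
period), then `∫ |f' - g'| > 2π(d₂ - d₁)` for every `g ∈ E_{d₂}`; in particular the
infimum `2π(d₂ - d₁)` is not attained. -/
theorem stmt8 (d₁ d₂ : ℤ) (h₁ : 0 < d₁) (h₂ : d₁ < d₂) (φ φ' : ℝ → ℝ)
    (hφ : MemE d₁ φ φ')
    (hpos : ∀ᵐ θ ∂(volume : Measure ℝ), θ ∈ Set.Ioo 0 (2 * π) → 0 < φ' θ) :
    (∀ ψ ψ' : ℝ → ℝ, MemE d₂ ψ ψ' →
      2 * π * ((d₂ : ℝ) - (d₁ : ℝ)) < dist11 φ φ' ψ ψ') ∧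
    ¬ ∃ ψ ψ' : ℝ → ℝ, MemE d₂ ψ ψ' ∧
        dist11 φ φ' ψ ψ' = 2 * π * ((d₂ : ℝ) - (d₁ : ℝ)) :=
  stmt8_general d₁ d₂ h₂ φ φ' hφ hpos
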